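/- arXiv:2201.11274 — 3 statements merged into one kernel-verified Lean document; each statement's English description precedes it below -/
import Mathlib

section
/- Let theta_1, ..., theta_r be distinct positive reals and c_1, ..., c_r reals, and let H(t) = c_1*theta_1^t + ... + c_r*theta_r^t. Then there is a constant c(theta_1,...,theta_r) > 0 such that for any reals 0 < v_1 < v_2 < ... < v_{2^r} < 1, there exists j with |H(v_j)| >= Delta^{r-1} * c(theta_1,...,theta_r) * max_i |c_i|, where Delta = min_{1<=k<2^r} (v_{k+1} - v_k). -/
private lemma rpow_le_max' {θ t : ℝ} (hθ : 0 < θ) (ht0 : 0 ≤ t) (ht1 : t ≤ 1) :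
    θ ^ t ≤ max 1 θ := by
  rcases le_total θ 1 with h | h
  · have := Real.rpow_le_rpow_of_exponent_ge hθ h ht0
    rw [Real.rpow_zero] at this
    exact this.trans (le_max_left _ _)
  · have := Real.rpow_le_rpow_of_exponent_le h ht1
    rw [Real.rpow_one] at this
    exact this.trans (le_max_right _ _)

private lemma min_le_rpow' {θ t : ℝ} (hθ : 0 < θ) (ht0 : 0 ≤ t) (ht1 : t ≤ 1) :
    min 1 θ ≤ θ ^ t := by
  rcases le_total θ 1 with h | h
  · have := Real.rpow_le_rpow_of_exponent_ge hθ h ht1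
    rw [Real.rpow_one] at this
    exact (min_le_right _ _).trans this
  · have := Real.rpow_le_rpow_of_exponent_le h ht0
    rw [Real.rpow_zero] at this
    exact (min_le_left _ _).trans this

private theorem key : ∀ (n : ℕ) (θ : Fin (n + 1) → ℝ), (∀ i, 0 < θ i) →
    Function.Injective θ →
    ∃ C : ℝ, 0 < C ∧
      ∀ (c : Fin (n + 1) → ℝ) (v : Fin (2 ^ (n + 1)) → ℝ), StrictMono v →
        (∀ k, v k ∈ Set.Ioo (0 : ℝ) 1) →
        ∀ Δ : ℝ, 0 ≤ Δ →
          (∀ (k : ℕ) (hk : k + 1 < 2 ^ (n + 1)),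
            Δ ≤ v ⟨k + 1, hk⟩ - v ⟨k, Nat.lt_of_succ_lt hk⟩) →
          ∃ j : Fin (2 ^ (n + 1)),
            Δ ^ n * C * (Finset.univ.sup' Finset.univ_nonempty fun i => |c i|) ≤
              |∑ i, c i * θ i ^ v j| := by
  intro n
  induction n with
  | zero =>
    intro θ hθ hinj
    refine ⟨min 1 (θ 0), lt_min one_pos (hθ 0), ?_⟩
    intro c v hv hmem Δ hΔ hgap
    refine ⟨0, ?_⟩
    have hsup : (Finset.univ.sup' Finset.univ_nonempty fun i => |c i|) ≤ |c 0| := by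
      apply Finset.sup'_le
      intro i _
      have : i = 0 := Fin.eq_zero i
      rw [this]
    have hmem0 := hmem 0
    have hrpow : min 1 (θ 0) ≤ θ 0 ^ v 0 :=
      min_le_rpow' (hθ 0) (le_of_lt hmem0.1) (le_of_lt hmem0.2)
    have hC0 : (0:ℝ) ≤ min 1 (θ 0) := le_min zero_le_one (le_of_lt (hθ 0))
    calc Δ ^ 0 * min 1 (θ 0) * (Finset.univ.sup' Finset.univ_nonempty fun i => |c i|)
        ≤ Δ ^ 0 * min 1 (θ 0) * |c 0| := by
          apply mul_le_mul_of_nonneg_left hsup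
          rw [pow_zero, one_mul]; exact hC0
      _ = min 1 (θ 0) * |c 0| := by rw [pow_zero, one_mul]
      _ ≤ θ 0 ^ v 0 * |c 0| := mul_le_mul_of_nonneg_right hrpow (abs_nonneg _)
      _ = |∑ i : Fin 1, c i * θ i ^ v 0| := by
          rw [Fin.sum_univ_one, abs_mul, abs_of_pos (Real.rpow_pos_of_pos (hθ 0) _)]
          ring
  | succ n ih =>
    intro θ hθ hinj
    set L : ℝ := θ (Fin.last (n + 1)) with hLdef
    have hL : 0 < L := hθ _
    set ρ : Fin (n + 2) → ℝ := fun i => θ i / L with hρdef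
    have hρpos : ∀ i, 0 < ρ i := fun i => div_pos (hθ i) hL
    have hρlast : ρ (Fin.last (n + 1)) = 1 := div_self (ne_of_gt hL)
    set θ' : Fin (n + 1) → ℝ := fun i => ρ i.castSucc with hθ'def
    have hθ'pos : ∀ i, 0 < θ' i := fun i => hρpos _
    have hθ'inj : Function.Injective θ' := by
      intro i j h
      have : θ i.castSucc = θ j.castSucc := by
        have := h
        simp only [θ', ρ] at this
        field_simp at this
        exact this
      exact Fin.castSucc_injective _ (hinj this)
    have hθ'ne1 : ∀ i, θ' i ≠ 1 := by
      intro i h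
      have : θ i.castSucc = L := by
        simp only [θ', ρ] at h
        field_simp at h
        exact h
      have := hinj this
      exact absurd this (Fin.ne_last_of_lt (Fin.castSucc_lt_last i))
    obtain ⟨C', hC', hIH⟩ := ih θ' hθ'pos hθ'inj
    set lam : ℝ := Finset.univ.inf' Finset.univ_nonempty fun i : Fin (n + 1) =>
      |Real.log (θ' i)| with hlamdef
    have hlam : 0 < lam := by
      rw [hlamdef, Finset.lt_inf'_iff]
      intro i _
      rw [abs_pos]
      exact Real.log_ne_zero_of_pos_of_ne_one (hθ'pos i) (hθ'ne1 i)
    set B : ℝ := max 1 L⁻¹ with hBdef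
    have hB : 0 < B := lt_of_lt_of_le one_pos (le_max_left _ _)
    set S : ℝ := ∑ i : Fin (n + 1), max 1 (θ' i) with hSdef
    have hS1 : (1:ℝ) ≤ S := by
      calc (1:ℝ) ≤ max 1 (θ' 0) := le_max_left _ _
        _ ≤ S := Finset.single_le_sum
            (fun (i : Fin (n + 1)) _ => le_trans zero_le_one (le_max_left 1 (θ' i)))
            (Finset.mem_univ (0 : Fin (n + 1)))
    set K : ℝ := B + S * (2 * B / (C' * lam)) with hKdef
    have hK : 0 < K := by positivity
    refine ⟨K⁻¹, inv_pos.mpr hK, ?_⟩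
    intro c v hv hmem Δ hΔ hgap
    rcases eq_or_lt_of_le hΔ with hΔ0 | hΔpos
    · refine ⟨0, ?_⟩
      rw [← hΔ0, zero_pow (Nat.succ_ne_zero n), zero_mul, zero_mul]
      exact abs_nonneg _
    -- main case Δ > 0
    have hpow2 : 2 ^ (n + 2) = 2 * 2 ^ (n + 1) := by rw [pow_succ]; ring
    have hpos1 : 1 ≤ 2 ^ (n + 1) := Nat.one_le_two_pow
    have hΔ1 : Δ ≤ 1 := by
      have h1lt : (1:ℕ) < 2 ^ (n + 2) := by omega
      have := hgap 0 h1lt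
      have h0 := (hmem ⟨0, by omega⟩).1
      have h1 := (hmem ⟨1, h1lt⟩).2
      linarith
    have hΔp1 : Δ ^ (n + 1) ≤ 1 := pow_le_one₀ hΔ hΔ1
    set P : ℝ → ℝ := fun t => ∑ i, c i * ρ i ^ t with hPdef
    set P' : ℝ → ℝ := fun t => ∑ i, c i * (ρ i ^ t * Real.log (ρ i)) with hP'def
    have hP : ∀ t, HasDerivAt P (P' t) t := by
      intro t
      exact HasDerivAt.fun_sum fun i _ =>
        HasDerivAt.const_mul (c i) ((Real.hasStrictDerivAt_const_rpow (hρpos i) t).hasDerivAt)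
    set M : ℝ := Finset.univ.sup' Finset.univ_nonempty
      fun j : Fin (2 ^ (n + 2)) => |∑ i, c i * θ i ^ v j| with hMdef
    have hM0 : 0 ≤ M :=
      le_trans (abs_nonneg _) (Finset.le_sup'
        (fun j : Fin (2 ^ (n + 2)) => |∑ i, c i * θ i ^ v j|)
        (Finset.mem_univ (0 : Fin (2 ^ (n + 2)))))
    have hHsplit : ∀ j, (∑ i, c i * θ i ^ v j) = P (v j) * L ^ (v j) := by
      intro j
      simp only [hPdef]
      rw [Finset.sum_mul]
      apply Finset.sum_congr rfl
      intro i _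
      have hθi : θ i = ρ i * L := by simp only [hρdef]; field_simp
      rw [hθi, Real.mul_rpow (le_of_lt (hρpos i)) (le_of_lt hL)]
      ring
    have hPbound : ∀ j, |P (v j)| ≤ M * B := by
      intro j
      have h1 : |∑ i, c i * θ i ^ v j| ≤ M :=
        Finset.le_sup' (fun j : Fin (2 ^ (n + 2)) => |∑ i, c i * θ i ^ v j|)
          (Finset.mem_univ j)
      have h2 : P (v j) = (∑ i, c i * θ i ^ v j) * (L⁻¹) ^ (v j) := by
        rw [hHsplit j, Real.inv_rpow (le_of_lt hL), mul_assoc,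
          mul_inv_cancel₀ (ne_of_gt (Real.rpow_pos_of_pos hL _)), mul_one]
      rw [h2, abs_mul, abs_of_pos (Real.rpow_pos_of_pos (inv_pos.mpr hL) _)]
      have h3 : (L⁻¹) ^ (v j) ≤ B :=
        rpow_le_max' (inv_pos.mpr hL) (le_of_lt (hmem j).1) (le_of_lt (hmem j).2)
      exact mul_le_mul h1 h3 (le_of_lt (Real.rpow_pos_of_pos (inv_pos.mpr hL) _)) hM0
    -- the pair points
    have hidx : ∀ k : Fin (2 ^ (n + 1)), 2 * k.1 + 1 < 2 ^ (n + 2) := by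
      intro k; have := k.isLt; omega
    set a : Fin (2 ^ (n + 1)) → ℝ :=
      fun k => v ⟨2 * k.1, Nat.lt_of_succ_lt (hidx k)⟩ with hadef
    set b : Fin (2 ^ (n + 1)) → ℝ := fun k => v ⟨2 * k.1 + 1, hidx k⟩ with hbdef
    have hab : ∀ k, a k < b k := by
      intro k
      exact hv (by simp [Fin.mk_lt_mk])
    have hmvt : ∀ k, ∃ ξ ∈ Set.Ioo (a k) (b k),
        P' ξ = (P (b k) - P (a k)) / (b k - a k) := by
      intro k
      exact exists_hasDerivAt_eq_slope P P' (hab k)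
        (fun x _ => (hP x).continuousAt.continuousWithinAt) (fun x _ => hP x)
    choose u hu1 hu2 using hmvt
    have hu_mono : StrictMono u := by
      intro k l hkl
      have h1 : u k < b k := (hu1 k).2
      have h2 : a l < u l := (hu1 l).1
      have h3 : b k ≤ a l := by
        apply hv.monotone
        simp only [Fin.mk_le_mk]
        omega
      linarith
    have hu_mem : ∀ k, u k ∈ Set.Ioo (0:ℝ) 1 := by
      intro k
      constructor
      · exact lt_trans (hmem _).1 (hu1 k).1
      · exact lt_trans (hu1 k).2 (hmem _).2
    have hu_gap : ∀ (k : ℕ) (hk : k + 1 < 2 ^ (n + 1)),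
        Δ ≤ u ⟨k + 1, hk⟩ - u ⟨k, Nat.lt_of_succ_lt hk⟩ := by
      intro k hk
      have hidx2 : 2 * k + 1 + 1 < 2 ^ (n + 2) := by omega
      have hg := hgap (2 * k + 1) hidx2
      have h1 : u ⟨k, Nat.lt_of_succ_lt hk⟩ < b ⟨k, Nat.lt_of_succ_lt hk⟩ :=
        (hu1 _).2
      have h2 : a ⟨k + 1, hk⟩ < u ⟨k + 1, hk⟩ := (hu1 _).1
      have hbeq : b ⟨k, Nat.lt_of_succ_lt hk⟩ = v ⟨2 * k + 1, Nat.lt_of_succ_lt hidx2⟩ := by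
        simp only [hbdef]
      have haeq : a ⟨k + 1, hk⟩ = v ⟨2 * k + 1 + 1, hidx2⟩ := by
        simp only [hadef]
        congr 1 <;> first
          | exact Fin.ext (by omega)
          | omega
      rw [hbeq] at h1
      rw [haeq] at h2
      linarith
    have hP'bound : ∀ k, |P' (u k)| ≤ 2 * (M * B) / Δ := by
      intro k
      rw [hu2 k]
      have hba : Δ ≤ b k - a k := by
        have := hgap (2 * k.1) (hidx k)
        simpa [hadef, hbdef] using this
      have hba0 : 0 < b k - a k := sub_pos.mpr (hab k)
      rw [abs_div, abs_of_pos hba0]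
      apply div_le_div₀ (by positivity) ?_ hΔpos hba
      calc |P (b k) - P (a k)| ≤ |P (b k)| + |P (a k)| := abs_sub _ _
        _ ≤ M * B + M * B := add_le_add (hPbound _) (hPbound _)
        _ = 2 * (M * B) := by ring
    have hP'sum : ∀ t, P' t = ∑ i : Fin (n + 1),
        (c i.castSucc * Real.log (θ' i)) * θ' i ^ t := by
      intro t
      simp only [hP'def]
      rw [Fin.sum_univ_castSucc]
      simp only [hρlast, Real.log_one, mul_zero, add_zero]
      exact Finset.sum_congr rfl fun i _ => by simp only [hθ'def]; ring
    obtain ⟨k, hk⟩ := hIH (fun i => c i.castSucc * Real.log (θ' i)) u hu_mono hu_mem Δ hΔ hu_gap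
    set Y : ℝ := Finset.univ.sup' Finset.univ_nonempty
      fun i : Fin (n + 1) => |c i.castSucc| with hYdef
    have hY0 : 0 ≤ Y :=
      le_trans (abs_nonneg _) (Finset.le_sup'
        (fun i : Fin (n + 1) => |c i.castSucc|) (Finset.mem_univ (0 : Fin (n + 1))))
    have hlamY : lam * Y ≤ Finset.univ.sup' Finset.univ_nonempty
        fun i : Fin (n + 1) => |c i.castSucc * Real.log (θ' i)| := by
      obtain ⟨i0, _, hi0⟩ := Finset.exists_mem_eq_sup' (Finset.univ_nonempty)
        (fun i : Fin (n + 1) => |c i.castSucc|)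
      rw [hYdef, hi0]
      calc lam * |c i0.castSucc| ≤ |Real.log (θ' i0)| * |c i0.castSucc| :=
            mul_le_mul_of_nonneg_right (Finset.inf'_le _ (Finset.mem_univ i0)) (abs_nonneg _)
        _ = |c i0.castSucc * Real.log (θ' i0)| := by rw [abs_mul]; ring
        _ ≤ _ := Finset.le_sup'
            (fun i : Fin (n + 1) => |c i.castSucc * Real.log (θ' i)|) (Finset.mem_univ i0)
    set D : ℝ := Δ ^ (n + 1) * (C' * lam) with hDdef
    have hD : 0 < D := by positivity
    have hYbound : Y ≤ 2 * (M * B) / D := by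
      rw [le_div_iff₀ hD]
      have hchain : Δ ^ n * C' * (lam * Y) ≤ 2 * (M * B) / Δ := by
        calc Δ ^ n * C' * (lam * Y) ≤ Δ ^ n * C' *
              (Finset.univ.sup' Finset.univ_nonempty
                fun i : Fin (n + 1) => |c i.castSucc * Real.log (θ' i)|) :=
              mul_le_mul_of_nonneg_left hlamY (by positivity)
          _ ≤ |∑ i : Fin (n + 1), (c i.castSucc * Real.log (θ' i)) * θ' i ^ u k| := hk
          _ = |P' (u k)| := by rw [hP'sum]
          _ ≤ 2 * (M * B) / Δ := hP'bound k
      have := (le_div_iff₀ hΔpos).mp hchain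
      calc Y * D = (Δ ^ n * C' * (lam * Y)) * Δ := by rw [hDdef]; ring
        _ ≤ 2 * (M * B) := this
    have hE0 : 0 ≤ 2 * (M * B) / D := by positivity
    have hlastc : |c (Fin.last (n + 1))| ≤ M * B + S * (2 * (M * B) / D) := by
      have hP0 : P (v 0) = (∑ i : Fin (n + 1), c i.castSucc * θ' i ^ v 0)
          + c (Fin.last (n + 1)) := by
        simp only [hPdef]
        rw [Fin.sum_univ_castSucc]
        simp only [hρlast, Real.one_rpow, mul_one, hθ'def]
      have : c (Fin.last (n + 1)) = P (v 0) - ∑ i : Fin (n + 1), c i.castSucc * θ' i ^ v 0 := by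
        rw [hP0]; ring
      rw [this]
      calc |P (v 0) - ∑ i : Fin (n + 1), c i.castSucc * θ' i ^ v 0|
          ≤ |P (v 0)| + |∑ i : Fin (n + 1), c i.castSucc * θ' i ^ v 0| := abs_sub _ _
        _ ≤ M * B + S * (2 * (M * B) / D) := by
            apply add_le_add (hPbound 0)
            calc |∑ i : Fin (n + 1), c i.castSucc * θ' i ^ v 0|
                ≤ ∑ i : Fin (n + 1), |c i.castSucc * θ' i ^ v 0| :=
                  Finset.abs_sum_le_sum_abs _ _
              _ ≤ ∑ i : Fin (n + 1), max 1 (θ' i) * (2 * (M * B) / D) := by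
                  apply Finset.sum_le_sum
                  intro i _
                  rw [abs_mul, abs_of_pos (Real.rpow_pos_of_pos (hθ'pos i) _)]
                  have h1 : |c i.castSucc| ≤ 2 * (M * B) / D := by
                    refine le_trans ?_ hYbound
                    rw [hYdef]
                    exact Finset.le_sup' (fun i : Fin (n + 1) => |c i.castSucc|)
                      (Finset.mem_univ i)
                  have h2 : θ' i ^ v (0 : Fin (2 ^ (n + 2))) ≤ max 1 (θ' i) :=
                    rpow_le_max' (hθ'pos i) (le_of_lt (hmem 0).1) (le_of_lt (hmem 0).2)
                  calc |c i.castSucc| * θ' i ^ v 0 ≤ (2 * (M * B) / D) * max 1 (θ' i) :=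
                        mul_le_mul h1 h2
                          (le_of_lt (Real.rpow_pos_of_pos (hθ'pos i) _)) hE0
                    _ = max 1 (θ' i) * (2 * (M * B) / D) := by ring
              _ = S * (2 * (M * B) / D) := by rw [hSdef, Finset.sum_mul]
    -- bound the full sup
    have hXbound : (Finset.univ.sup' Finset.univ_nonempty fun i : Fin (n + 2) => |c i|)
        ≤ M * B + S * (2 * (M * B) / D) := by
      apply Finset.sup'_le
      intro i _
      induction i using Fin.lastCases with
      | last => exact hlastc
      | cast j =>
        have h1 : |c j.castSucc| ≤ 2 * (M * B) / D := by
          refine le_trans ?_ hYbound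
          rw [hYdef]
          exact Finset.le_sup' (fun i : Fin (n + 1) => |c i.castSucc|) (Finset.mem_univ j)
        have h2 : 2 * (M * B) / D ≤ S * (2 * (M * B) / D) :=
          le_mul_of_one_le_left hE0 hS1
        have h3 : 0 ≤ M * B := mul_nonneg hM0 (le_of_lt hB)
        linarith
    obtain ⟨j, _, hj⟩ := Finset.exists_mem_eq_sup' (Finset.univ_nonempty)
      (fun j : Fin (2 ^ (n + 2)) => |∑ i, c i * θ i ^ v j|)
    refine ⟨j, ?_⟩
    rw [← hj, ← hMdef]
    -- final algebra
    set X : ℝ := Finset.univ.sup' Finset.univ_nonempty fun i : Fin (n + 2) => |c i| with hXdef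
    have hX0 : 0 ≤ X :=
      le_trans (abs_nonneg _) (Finset.le_sup'
        (fun i : Fin (n + 2) => |c i|) (Finset.mem_univ (0 : Fin (n + 2))))
    have hΔpow : (0:ℝ) < Δ ^ (n + 1) := by positivity
    have hcancel : Δ ^ (n + 1) * (2 * (M * B) / D) = 2 * (M * B) / (C' * lam) := by
      rw [hDdef, mul_div_assoc']
      exact mul_div_mul_left _ _ (ne_of_gt hΔpow)
    have hmain : Δ ^ (n + 1) * X ≤ K * M := by
      calc Δ ^ (n + 1) * X ≤ Δ ^ (n + 1) * (M * B + S * (2 * (M * B) / D)) :=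
            mul_le_mul_of_nonneg_left hXbound hΔpow.le
        _ = Δ ^ (n + 1) * (M * B) + S * (Δ ^ (n + 1) * (2 * (M * B) / D)) := by ring
        _ ≤ 1 * (M * B) + S * (2 * (M * B) / (C' * lam)) := by
            rw [hcancel]
            have : Δ ^ (n + 1) * (M * B) ≤ 1 * (M * B) :=
              mul_le_mul_of_nonneg_right hΔp1 (mul_nonneg hM0 hB.le)
            linarith
        _ = K * M := by rw [hKdef]; ring
    rw [show Δ ^ (n + 1) * K⁻¹ * X = (Δ ^ (n + 1) * X) / K by rw [div_eq_mul_inv]; ring]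
    rw [div_le_iff₀ hK]
    linarith

theorem stmt_8 (r : ℕ) (hr : 0 < r) (θ : Fin r → ℝ) (hθ : ∀ i, 0 < θ i)
    (hinj : Function.Injective θ) :
    ∃ C : ℝ, 0 < C ∧
      ∀ (c : Fin r → ℝ) (v : Fin (2 ^ r) → ℝ), StrictMono v →
        (∀ k, v k ∈ Set.Ioo (0 : ℝ) 1) →
        ∀ Δ : ℝ, 0 ≤ Δ →
          (∀ (k : ℕ) (hk : k + 1 < 2 ^ r),
            Δ ≤ v ⟨k + 1, hk⟩ - v ⟨k, Nat.lt_of_succ_lt hk⟩) →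
          ∃ j : Fin (2 ^ r),
            Δ ^ (r - 1) * C *
                (Finset.univ.sup' (Finset.univ_nonempty_iff.mpr ⟨⟨0, hr⟩⟩)
                  fun i => |c i|) ≤
              |∑ i, c i * θ i ^ v j| := by
  obtain ⟨n, rfl⟩ : ∃ n, r = n + 1 := ⟨r - 1, (Nat.succ_pred_eq_of_pos hr).symm⟩
  simpa using key n θ hθ hinj
end

section
/- Let p be a prime, H >= 1, and P a prime with P > p^{2H}. Then all residues modulo P of the form d_1*ceil(P/p) + d_2*ceil(P/p^2) + ... + d_H*ceil(P/p^H) + x, with 0 <= d_i < p/10 and 0 <= x < ceil(P/p^H), are pairwise distinct modulo P. In particular, the set A of such residues has size at least (p/10)^H * (P/p^H) >= P/10^H. -/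
/-!
Write `c j = ⌈P / p ^ j⌉`, so `c 0 = P`. Because `P ≥ p ^ (H + 1)`, each `c (j + 1)` is close
enough to `c j / p` that `(d + 1) * c (j + 1) ≤ c j` for every digit `d < p / 10`. The numbers
`c 1, …, c H` therefore behave like the place values of a mixed-radix system: every expression
`∑ d i * c (i + 1) + x` with `x < c H` lies below `c 0 = P`, and its digits are recovered from it
by successive division. Distinct expressions are thus distinct integers in `[0, P)`, hence distinct
modulo `P`, and counting them gives `⌈p / 10⌉ ^ H * ⌈P / p ^ H⌉ ≥ P / 10 ^ H` residues.
-/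

theorem eq_and_eq_of_mul_add_eq_mul_add {a b s t C : ℕ} (hs : s < C) (ht : t < C)
    (h : a * C + s = b * C + t) : a = b ∧ s = t := by
  have hab : a = b := by
    rcases lt_trichotomy a b with hlt | heq | hgt
    · nlinarith
    · exact heq
    · nlinarith
  subst hab
  exact ⟨rfl, by omega⟩

theorem mixedRadix_sum_lt (n : ℕ) (c : ℕ → ℕ) (d : Fin n → ℕ) (x : ℕ)
    (hd : ∀ i : Fin n, (d i + 1) * c (i + 1) ≤ c i) (hx : x < c n) :
    ∑ i, d i * c (i + 1) + x < c 0 := by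
  induction n generalizing c with
  | zero => simpa using hx
  | succ n ih =>
    have htail : ∑ i : Fin n, d i.succ * c (i + 1 + 1) + x < c 1 :=
      ih (fun j => c (j + 1)) (fun i => d i.succ) (fun i => hd i.succ) hx
    rw [Fin.sum_univ_succ]
    simp only [Fin.val_zero, Fin.val_succ, zero_add]
    calc d 0 * c 1 + ∑ i : Fin n, d i.succ * c (i + 1 + 1) + x
        < d 0 * c 1 + c 1 := by omega
      _ = (d 0 + 1) * c 1 := by ring
      _ ≤ c 0 := hd 0

theorem eq_of_mixedRadix_sum_eq (n : ℕ) (c : ℕ → ℕ) (d d' : Fin n → ℕ) (x x' : ℕ)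
    (hd : ∀ i : Fin n, (d i + 1) * c (i + 1) ≤ c i)
    (hd' : ∀ i : Fin n, (d' i + 1) * c (i + 1) ≤ c i)
    (hx : x < c n) (hx' : x' < c n)
    (h : ∑ i, d i * c (i + 1) + x = ∑ i, d' i * c (i + 1) + x') : d = d' ∧ x = x' := by
  induction n generalizing c with
  | zero => exact ⟨funext fun i => i.elim0, by simpa using h⟩
  | succ n ih =>
    simp only [Fin.sum_univ_succ, Fin.val_zero, Fin.val_succ, zero_add, add_assoc] at h
    obtain ⟨h0, htail⟩ := eq_and_eq_of_mul_add_eq_mul_add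
      (mixedRadix_sum_lt n (fun j => c (j + 1)) (fun i => d i.succ) x (fun i => hd i.succ) hx)
      (mixedRadix_sum_lt n (fun j => c (j + 1)) (fun i => d' i.succ) x' (fun i => hd' i.succ) hx') h
    obtain ⟨hsucc, hxx⟩ := ih (fun j => c (j + 1)) (fun i => d i.succ) (fun i => d' i.succ)
      (fun i => hd i.succ) (fun i => hd' i.succ) hx hx' htail
    exact ⟨funext fun i => Fin.cases h0 (congrFun hsucc) i, hxx⟩

theorem succ_mul_ceil_le_ceil_mul {p d : ℕ} {y : ℝ} (hp : 2 ≤ p) (hd : 10 * d < p)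
    (hy : (p : ℝ) ≤ y) : (d + 1) * ⌈y⌉₊ ≤ ⌈p * y⌉₊ := by
  have hceil : (⌈y⌉₊ : ℝ) < y + 1 := Nat.ceil_lt_add_one (by linarith)
  have hp' : (2 : ℝ) ≤ p := by exact_mod_cast hp
  have hd' : 10 * ((d : ℝ) + 1) ≤ p + 9 := by exact_mod_cast (by omega : 10 * (d + 1) ≤ p + 9)
  -- `(p + 9) * (y + 1) ≤ 10 * p * y` as soon as `y ≥ p ≥ 2`
  have hdigit : ((d : ℝ) + 1) * (y + 1) ≤ p * y := by nlinarith
  suffices ((d + 1) * ⌈y⌉₊ : ℝ) < ⌈p * y⌉₊ by exact_mod_cast this.le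
  calc ((d + 1) * ⌈y⌉₊ : ℝ) < (d + 1) * (y + 1) := by gcongr
    _ ≤ p * y := hdigit
    _ ≤ ⌈p * y⌉₊ := Nat.le_ceil _

theorem ncard_setOf_digits_eq {α : Type*} {H m N : ℕ} (g : (Fin H → ℕ) → ℕ → α)
    (hg : ∀ d d' x x', (∀ i, d i < m) → (∀ i, d' i < m) → x < N → x' < N →
      g d x = g d' x' → d = d' ∧ x = x') :
    {a | ∃ (d : Fin H → ℕ) (x : ℕ), (∀ i, d i < m) ∧ x < N ∧ a = g d x}.ncard =
      m ^ H * N := by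
  let F : (Fin H → Fin m) × Fin N → α := fun q => g (fun i => q.1 i) q.2
  have hF : Function.Injective F := by
    rintro ⟨d, x⟩ ⟨d', x'⟩ h
    obtain ⟨hdd, hxx⟩ :=
      hg _ _ _ _ (fun i => (d i).isLt) (fun i => (d' i).isLt) x.isLt x'.isLt h
    simp only [Prod.mk.injEq]
    exact ⟨funext fun i => Fin.ext (congrFun hdd i), Fin.ext hxx⟩
  have hrange :
      {a | ∃ (d : Fin H → ℕ) (x : ℕ), (∀ i, d i < m) ∧ x < N ∧ a = g d x} =
        Set.range F := by
    ext a
    constructor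
    · rintro ⟨d, x, hd, hx, rfl⟩
      exact ⟨(fun i => ⟨d i, hd i⟩, ⟨x, hx⟩), rfl⟩
    · rintro ⟨q, rfl⟩
      exact ⟨_, _, fun i => (q.1 i).isLt, q.2.isLt, rfl⟩
  rw [hrange, ← Nat.card_coe_set_eq, Nat.card_range_of_injective hF]
  simp

theorem div_ten_pow_le_digits_mul_ceil {p P H : ℕ} (hp : 0 < p) :
    (P : ℝ) / 10 ^ H ≤ (((p + 9) / 10) ^ H * ⌈(P : ℝ) / (p : ℝ) ^ H⌉₊ : ℕ) := by
  have hm : (p : ℝ) / 10 ≤ ((p + 9) / 10 : ℕ) := by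
    rw [div_le_iff₀ (by norm_num)]
    exact_mod_cast (by omega : p ≤ (p + 9) / 10 * 10)
  push_cast
  calc (P : ℝ) / 10 ^ H = ((p : ℝ) / 10) ^ H * ((P : ℝ) / (p : ℝ) ^ H) := by
        rw [div_pow]; field_simp
    _ ≤ _ := by gcongr; exact Nat.le_ceil _

theorem stmt_10_general (p P H : ℕ) (hp : p.Prime)
    (hPp : p ^ (2 * H) < P) :
    (∀ (d d' : Fin H → ℕ) (x x' : ℕ),
      (∀ i, 10 * d i < p) → (∀ i, 10 * d' i < p) →
      x < ⌈(P : ℝ) / (p : ℝ) ^ H⌉₊ → x' < ⌈(P : ℝ) / (p : ℝ) ^ H⌉₊ →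
      (∑ i : Fin H, d i * ⌈(P : ℝ) / (p : ℝ) ^ ((i : ℕ) + 1)⌉₊ + x) ≡
        (∑ i : Fin H, d' i * ⌈(P : ℝ) / (p : ℝ) ^ ((i : ℕ) + 1)⌉₊ + x') [MOD P] →
      d = d' ∧ x = x') ∧
    (P : ℝ) / 10 ^ H ≤
      (Set.ncard {a : ZMod P | ∃ (d : Fin H → ℕ) (x : ℕ),
        (∀ i, 10 * d i < p) ∧ x < ⌈(P : ℝ) / (p : ℝ) ^ H⌉₊ ∧
        a = ((∑ i : Fin H, d i * ⌈(P : ℝ) / (p : ℝ) ^ ((i : ℕ) + 1)⌉₊ + x : ℕ) : ZMod P)} : ℝ) := by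
  set c : ℕ → ℕ := fun j => ⌈(P : ℝ) / (p : ℝ) ^ j⌉₊
  have hc0 : c 0 = P := by simp [c]
  have hradix (d : Fin H → ℕ) (hd : ∀ i, 10 * d i < p) (i : Fin H) :
      (d i + 1) * c (i + 1) ≤ c i := by
    have hpow : p ^ ((i : ℕ) + 2) ≤ P := (Nat.pow_le_pow_right hp.pos (by omega)).trans hPp.le
    have hp0 : (0 : ℝ) < p := by exact_mod_cast hp.pos
    convert succ_mul_ceil_le_ceil_mul hp.two_le (hd i) _ using 2
    · field_simp [c]
      ring
    · rw [le_div_iff₀ (by positivity), ← pow_succ']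
      exact_mod_cast hpow
  have hdistinct : ∀ (d d' : Fin H → ℕ) (x x' : ℕ),
      (∀ i, 10 * d i < p) → (∀ i, 10 * d' i < p) → x < c H → x' < c H →
      ∑ i, d i * c (i + 1) + x ≡ ∑ i, d' i * c (i + 1) + x' [MOD P] →
      d = d' ∧ x = x' := by
    intro d d' x x' hd hd' hx hx' hmod
    refine eq_of_mixedRadix_sum_eq H c d d' x x' (hradix d hd) (hradix d' hd') hx hx' ?_
    exact hmod.eq_of_lt_of_lt (hc0 ▸ mixedRadix_sum_lt H c d x (hradix d hd) hx)
      (hc0 ▸ mixedRadix_sum_lt H c d' x' (hradix d' hd') hx')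
  refine ⟨hdistinct, ?_⟩
  have hdigit (e : ℕ) : 10 * e < p ↔ e < (p + 9) / 10 := by omega
  simp only [hdigit] at hdistinct ⊢
  rw [ncard_setOf_digits_eq _ fun d d' x x' hd hd' hx hx' h =>
    hdistinct d d' x x' hd hd' hx hx' ((ZMod.natCast_eq_natCast_iff _ _ _).mp h)]
  exact div_ten_pow_le_digits_mul_ceil hp.pos

theorem stmt_10 (p P H : ℕ) (hp : p.Prime) (hP : P.Prime) (hH : 1 ≤ H)
    (hPp : p ^ (2 * H) < P) :
    (∀ (d d' : Fin H → ℕ) (x x' : ℕ),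
      (∀ i, 10 * d i < p) → (∀ i, 10 * d' i < p) →
      x < ⌈(P : ℝ) / (p : ℝ) ^ H⌉₊ → x' < ⌈(P : ℝ) / (p : ℝ) ^ H⌉₊ →
      (∑ i : Fin H, d i * ⌈(P : ℝ) / (p : ℝ) ^ ((i : ℕ) + 1)⌉₊ + x) ≡
        (∑ i : Fin H, d' i * ⌈(P : ℝ) / (p : ℝ) ^ ((i : ℕ) + 1)⌉₊ + x') [MOD P] →
      d = d' ∧ x = x') ∧
    (P : ℝ) / 10 ^ H ≤
      (Set.ncard {a : ZMod P | ∃ (d : Fin H → ℕ) (x : ℕ),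
        (∀ i, 10 * d i < p) ∧ x < ⌈(P : ℝ) / (p : ℝ) ^ H⌉₊ ∧
        a = ((∑ i : Fin H, d i * ⌈(P : ℝ) / (p : ℝ) ^ ((i : ℕ) + 1)⌉₊ + x : ℕ) : ZMod P)} : ℝ) :=
  stmt_10_general p P H hp hPp
end

section
/- Let p_1, p_2 be distinct odd primes, and suppose there exist nonzero integers n_1, n_2, n_3 with n_1*(log 2)/(log p_1) + n_2*(log 2)/(log p_2) = n_3 and n_2 > 0, |n_1/n_2| <= 1. Then for every positive integer n, {n*(log 2)/(log p_2)} = f(n) - (n_1/n_2)*{n*(log 2)/(log p_1)} for some f(n) lying in a fixed finite set S of real numbers with |S| <= 3*n_2^2, where S depends only on n_1, n_2, n_3 (not on n). -/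
theorem stmt_13 (p₁ p₂ : ℕ) (h1 : p₁.Prime) (h2 : p₂.Prime) (hne : p₁ ≠ p₂)
    (ho1 : Odd p₁) (ho2 : Odd p₂) (n₁ n₂ n₃ : ℤ) (hn1 : n₁ ≠ 0) (hn2 : 0 < n₂)
    (hn3 : n₃ ≠ 0) (hrat : |n₁| ≤ n₂)
    (hrel : (n₁ : ℝ) * (Real.log 2 / Real.log p₁) +
      (n₂ : ℝ) * (Real.log 2 / Real.log p₂) = (n₃ : ℝ)) :
    ∃ S : Finset ℝ, (S.card : ℤ) ≤ 3 * n₂ ^ 2 ∧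
      ∀ n : ℕ, 0 < n → ∃ f ∈ S,
        Int.fract ((n : ℝ) * Real.log 2 / Real.log p₂) =
          f - ((n₁ : ℝ) / (n₂ : ℝ)) *
            Int.fract ((n : ℝ) * Real.log 2 / Real.log p₁) := by
  have hn2R : (0 : ℝ) < (n₂ : ℝ) := by exact_mod_cast hn2
  have habs : |(n₁ : ℝ)| ≤ (n₂ : ℝ) := by exact_mod_cast hrat
  obtain ⟨habs1, habs2⟩ := abs_le.mp habs
  refine ⟨(Finset.Icc (-n₂ + 1) (2 * n₂ - 1)).image (fun k : ℤ => (k : ℝ) / (n₂ : ℝ)),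
    ?_, ?_⟩
  · calc ((Finset.image (fun k : ℤ => (k : ℝ) / (n₂ : ℝ))
        (Finset.Icc (-n₂ + 1) (2 * n₂ - 1))).card : ℤ)
        ≤ ((Finset.Icc (-n₂ + 1) (2 * n₂ - 1)).card : ℤ) := by
          exact_mod_cast Finset.card_image_le
      _ ≤ 3 * n₂ ^ 2 := by
          rw [Int.card_Icc]
          have h : (2 * n₂ - 1 + 1 - (-n₂ + 1)) = 3 * n₂ - 1 := by ring
          rw [h, Int.toNat_of_nonneg (by omega)]
          nlinarith
  · intro n hn
    set A : ℝ := (n : ℝ) * Real.log 2 / Real.log p₁ with hA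
    set B : ℝ := (n : ℝ) * Real.log 2 / Real.log p₂ with hB
    set k : ℤ := (n : ℤ) * n₃ - n₂ * ⌊B⌋ - n₁ * ⌊A⌋ with hk
    have hkR : (k : ℝ) = (n₂ : ℝ) * Int.fract B + (n₁ : ℝ) * Int.fract A := by
      rw [hk, Int.fract, Int.fract, hA, hB]
      push_cast
      linear_combination -(n : ℝ) * hrel
    have h0a := Int.fract_nonneg A
    have h1a := Int.fract_lt_one A
    have h0b := Int.fract_nonneg B
    have h1b := Int.fract_lt_one B
    have hub : (k : ℝ) < 2 * (n₂ : ℝ) := by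
      nlinarith [mul_nonneg (by linarith : (0:ℝ) ≤ (n₂:ℝ) - n₁) h0a]
    have hlb : -(n₂ : ℝ) < (k : ℝ) := by
      nlinarith [mul_nonneg (by linarith : (0:ℝ) ≤ (n₂:ℝ) + n₁) h0a]
    have hubZ : k ≤ 2 * n₂ - 1 := by
      have : (k : ℝ) < ((2 * n₂ : ℤ) : ℝ) := by push_cast; linarith
      have := Int.cast_lt.mp this
      omega
    have hlbZ : -n₂ + 1 ≤ k := by
      have : ((-n₂ : ℤ) : ℝ) < (k : ℝ) := by push_cast; linarith
      have := Int.cast_lt.mp this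
      omega
    refine ⟨(k : ℝ) / (n₂ : ℝ), ?_, ?_⟩
    · exact Finset.mem_image.mpr ⟨k, Finset.mem_Icc.mpr ⟨hlbZ, hubZ⟩, rfl⟩
    · field_simp
      linarith [hkR]
end
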